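/- Let G = (V, E) be a finite connected simple graph and V = V₀ ⊔ V₁ a partition into two nonempty sets (source and sink). Then for every map σ : ℕ → V₀ such that the preimage σ⁻¹(v) is infinite for each v ∈ V₀, and for every μ : V₀ → [0,∞), one has (T_{σ(N)} ∘ ⋯ ∘ T_{σ(1)} μ)(v) → 0 as N → ∞, for every v ∈ V₀. -/
import Mathlib


open Filter

namespace GraphToppling

variable {α : Type*} [Fintype α] [DecidableEq α]

/-- The toppling operator `T_v` on masses `μ : V₀ → [0,∞)` (here recorded as functions
on all vertices, the values outside the source `V₀` being irrelevant): vertex `v` sends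
all its mass in equal parts `μ(v)/deg(v)` to its neighbours, the mass arriving at sink
vertices (those outside `V₀`) being discarded. -/
noncomputable def gtopple (G : SimpleGraph α) [DecidableRel G.Adj] (V₀ : Set α)
    [DecidablePred (· ∈ V₀)] (v : α) (μ : α → ℝ) : α → ℝ :=
  fun w =>
    if w ∈ V₀ then
      if w = v then 0
      else if G.Adj v w then μ w + μ v / (G.degree v : ℝ)
      else μ w
    else μ w

/-- The composition `T_{σ(N)} ∘ ⋯ ∘ T_{σ(1)}` applied to `μ`. -/
noncomputable def run (G : SimpleGraph α) [DecidableRel G.Adj] (V₀ : Set α)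
    [DecidablePred (· ∈ V₀)] (σ : ℕ → α) (μ : α → ℝ) : ℕ → (α → ℝ)
  | 0 => μ
  | N + 1 => gtopple G V₀ (σ (N + 1)) (run G V₀ σ μ N)

section Aux

variable (G : SimpleGraph α) [DecidableRel G.Adj] (V₀ : Set α) [DecidablePred (· ∈ V₀)]
    (σ : ℕ → α) (μ : α → ℝ)

lemma run_succ (N : ℕ) :
    run G V₀ σ μ (N + 1) = gtopple G V₀ (σ (N + 1)) (run G V₀ σ μ N) := rfl

lemma run_nonneg (hσmem : ∀ k, σ k ∈ V₀) (hμ : ∀ v ∈ V₀, 0 ≤ μ v) (N : ℕ) :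
    ∀ w ∈ V₀, 0 ≤ run G V₀ σ μ N w := by
  induction N with
  | zero => exact hμ
  | succ N ih =>
    intro w hw
    rw [run_succ]
    unfold gtopple
    rw [if_pos hw]
    split_ifs with h1 h2
    · exact le_refl 0
    · exact add_nonneg (ih w hw) (div_nonneg (ih _ (hσmem _)) (Nat.cast_nonneg _))
    · exact ih w hw

/-- Total mass at time `N`. -/
noncomputable def mass (N : ℕ) : ℝ :=
  ∑ w ∈ Finset.univ.filter (· ∈ V₀), run G V₀ σ μ N w

lemma mass_nonneg (hσmem : ∀ k, σ k ∈ V₀) (hμ : ∀ v ∈ V₀, 0 ≤ μ v) (N : ℕ) :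
    0 ≤ mass G V₀ σ μ N :=
  Finset.sum_nonneg fun w hw =>
    run_nonneg G V₀ σ μ hσmem hμ N w (Finset.mem_filter.mp hw).2

lemma sum_gtopple (v : α) (hv : v ∈ V₀) (ν : α → ℝ) :
    ∑ w ∈ Finset.univ.filter (· ∈ V₀), gtopple G V₀ v ν w
      = (∑ w ∈ (Finset.univ.filter (· ∈ V₀)).erase v, ν w)
        + ((((Finset.univ.filter (· ∈ V₀)).erase v).filter (G.Adj v)).card : ℝ)
            * (ν v / G.degree v) := by
  classical
  set F := Finset.univ.filter (· ∈ V₀) with hF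
  have hvF : v ∈ F := Finset.mem_filter.mpr ⟨Finset.mem_univ v, hv⟩
  rw [← Finset.insert_erase hvF, Finset.sum_insert (Finset.notMem_erase _ _)]
  have h0 : gtopple G V₀ v ν v = 0 := by
    unfold gtopple; rw [if_pos hv, if_pos rfl]
  rw [h0, zero_add]
  have hcongr : ∀ w ∈ F.erase v,
      gtopple G V₀ v ν w = ν w + (if G.Adj v w then ν v / G.degree v else 0) := by
    intro w hw
    obtain ⟨hwne, hwF⟩ := Finset.mem_erase.mp hw
    have hwV : w ∈ V₀ := (Finset.mem_filter.mp hwF).2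
    unfold gtopple
    rw [if_pos hwV, if_neg hwne]
    split_ifs <;> simp
  rw [Finset.sum_congr rfl hcongr, Finset.sum_add_distrib, ← Finset.sum_filter,
    Finset.sum_const, nsmul_eq_mul, Finset.erase_insert (Finset.notMem_erase v F)]

lemma mass_succ (N : ℕ) (hv : σ (N + 1) ∈ V₀) :
    mass G V₀ σ μ (N + 1)
      = (∑ w ∈ (Finset.univ.filter (· ∈ V₀)).erase (σ (N + 1)), run G V₀ σ μ N w)
        + ((((Finset.univ.filter (· ∈ V₀)).erase (σ (N + 1))).filter
              (G.Adj (σ (N + 1)))).card : ℝ)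
            * (run G V₀ σ μ N (σ (N + 1)) / G.degree (σ (N + 1))) := by
  rw [mass, run_succ, sum_gtopple G V₀ (σ (N + 1)) hv]

lemma mass_eq_erase (N : ℕ) (v : α) (hv : v ∈ V₀) :
    mass G V₀ σ μ N
      = (∑ w ∈ (Finset.univ.filter (· ∈ V₀)).erase v, run G V₀ σ μ N w)
        + run G V₀ σ μ N v := by
  have hvF : v ∈ Finset.univ.filter (· ∈ V₀) :=
    Finset.mem_filter.mpr ⟨Finset.mem_univ v, hv⟩
  rw [mass, ← Finset.insert_erase hvF, Finset.sum_insert (Finset.notMem_erase _ _),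
    Finset.erase_insert (Finset.notMem_erase v _)]
  ring

lemma filter_adj_card_le (v : α) :
    (((Finset.univ.filter (· ∈ V₀)).erase v).filter (G.Adj v)).card ≤ G.degree v := by
  rw [← SimpleGraph.card_neighborFinset_eq_degree]
  apply Finset.card_le_card
  intro w hw
  exact (SimpleGraph.mem_neighborFinset G v w).mpr (Finset.mem_filter.mp hw).2

lemma filter_adj_card_le_sub (v : α) (s : α) (hadj : G.Adj v s) (hs : s ∉ V₀) :
    (((Finset.univ.filter (· ∈ V₀)).erase v).filter (G.Adj v)).card + 1 ≤ G.degree v := by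
  rw [← SimpleGraph.card_neighborFinset_eq_degree]
  have hsub : (((Finset.univ.filter (· ∈ V₀)).erase v).filter (G.Adj v))
      ⊆ (G.neighborFinset v).erase s := by
    intro w hw
    rw [Finset.mem_filter] at hw
    obtain ⟨hw1, hw2⟩ := hw
    have hwV : w ∈ V₀ := (Finset.mem_filter.mp (Finset.mem_of_mem_erase hw1)).2
    refine Finset.mem_erase.mpr ⟨?_, (SimpleGraph.mem_neighborFinset G v w).mpr hw2⟩
    rintro rfl; exact hs hwV
  have hs' : s ∈ G.neighborFinset v := (SimpleGraph.mem_neighborFinset G v s).mpr hadj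
  calc (((Finset.univ.filter (· ∈ V₀)).erase v).filter (G.Adj v)).card + 1
      ≤ ((G.neighborFinset v).erase s).card + 1 := by
        exact Nat.add_le_add_right (Finset.card_le_card hsub) 1
    _ = (G.neighborFinset v).card := by
        rw [Finset.card_erase_of_mem hs', Nat.sub_add_cancel]
        exact Finset.card_pos.mpr ⟨s, hs'⟩

lemma mass_antitone (hσmem : ∀ k, σ k ∈ V₀) (hμ : ∀ v ∈ V₀, 0 ≤ μ v)
    (hdeg : ∀ u : α, 0 < G.degree u) (N : ℕ) :
    mass G V₀ σ μ (N + 1) ≤ mass G V₀ σ μ N := by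
  set v := σ (N + 1) with hvdef
  have hv : v ∈ V₀ := hσmem _
  rw [mass_succ G V₀ σ μ N hv, mass_eq_erase G V₀ σ μ N v hv]
  have hnn : 0 ≤ run G V₀ σ μ N v := run_nonneg G V₀ σ μ hσmem hμ N v hv
  have hd : (0 : ℝ) < G.degree v := by exact_mod_cast hdeg v
  gcongr
  have hcard : ((((Finset.univ.filter (· ∈ V₀)).erase v).filter (G.Adj v)).card : ℝ)
      ≤ (G.degree v : ℝ) := by exact_mod_cast filter_adj_card_le G V₀ v
  calc ((((Finset.univ.filter (· ∈ V₀)).erase v).filter (G.Adj v)).card : ℝ)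
        * (run G V₀ σ μ N v / G.degree v)
      ≤ (G.degree v : ℝ) * (run G V₀ σ μ N v / G.degree v) := by
        exact mul_le_mul_of_nonneg_right hcard (div_nonneg hnn hd.le)
    _ = run G V₀ σ μ N v := by field_simp

lemma mass_drop (hσmem : ∀ k, σ k ∈ V₀) (hμ : ∀ v ∈ V₀, 0 ≤ μ v)
    (N : ℕ) (s : α) (hadj : G.Adj (σ (N + 1)) s) (hs : s ∉ V₀) :
    mass G V₀ σ μ (N + 1)
      ≤ mass G V₀ σ μ N - run G V₀ σ μ N (σ (N + 1)) / G.degree (σ (N + 1)) := by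
  set v := σ (N + 1) with hvdef
  have hv : v ∈ V₀ := hσmem _
  rw [mass_succ G V₀ σ μ N hv, mass_eq_erase G V₀ σ μ N v hv]
  have hnn : 0 ≤ run G V₀ σ μ N v := run_nonneg G V₀ σ μ hσmem hμ N v hv
  have hdnat : 0 < G.degree v := by
    rw [SimpleGraph.degree_pos_iff_exists_adj]; exact ⟨s, hadj⟩
  have hd : (0 : ℝ) < G.degree v := by exact_mod_cast hdnat
  have hcard : ((((Finset.univ.filter (· ∈ V₀)).erase v).filter (G.Adj v)).card : ℝ)
      ≤ (G.degree v : ℝ) - 1 := by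
    have := filter_adj_card_le_sub G V₀ v s hadj hs
    have : ((((Finset.univ.filter (· ∈ V₀)).erase v).filter (G.Adj v)).card + 1 : ℝ)
        ≤ (G.degree v : ℝ) := by exact_mod_cast this
    linarith
  have key : ((((Finset.univ.filter (· ∈ V₀)).erase v).filter (G.Adj v)).card : ℝ)
        * (run G V₀ σ μ N v / G.degree v)
      ≤ run G V₀ σ μ N v - run G V₀ σ μ N v / G.degree v := by
    calc ((((Finset.univ.filter (· ∈ V₀)).erase v).filter (G.Adj v)).card : ℝ)
          * (run G V₀ σ μ N v / G.degree v)
        ≤ ((G.degree v : ℝ) - 1) * (run G V₀ σ μ N v / G.degree v) := by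
          apply mul_le_mul_of_nonneg_right hcard (div_nonneg hnn hd.le)
      _ = run G V₀ σ μ N v - run G V₀ σ μ N v / G.degree v := by
          field_simp
  linarith

lemma mass_diff_tendsto (hσmem : ∀ k, σ k ∈ V₀) (hμ : ∀ v ∈ V₀, 0 ≤ μ v)
    (hdeg : ∀ u : α, 0 < G.degree u) :
    Tendsto (fun N => mass G V₀ σ μ N - mass G V₀ σ μ (N + 1)) atTop (nhds 0) := by
  have hanti : Antitone (mass G V₀ σ μ) :=
    antitone_nat_of_succ_le (fun n => mass_antitone G V₀ σ μ hσmem hμ hdeg n)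
  have hbdd : BddBelow (Set.range (mass G V₀ σ μ)) := by
    refine ⟨0, ?_⟩
    rintro x ⟨N, rfl⟩
    exact mass_nonneg G V₀ σ μ hσmem hμ N
  have h1 : Tendsto (mass G V₀ σ μ) atTop (nhds (⨅ i, mass G V₀ σ μ i)) :=
    tendsto_atTop_ciInf hanti hbdd
  have h2 : Tendsto (fun N => mass G V₀ σ μ (N + 1)) atTop
      (nhds (⨅ i, mass G V₀ σ μ i)) :=
    h1.comp (Filter.tendsto_add_atTop_nat 1)
  have := h1.sub h2
  simpa using this

/-- Between topples of `v`, the mass at `v` does not decrease. -/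
lemma run_mono_of_ne (hσmem : ∀ k, σ k ∈ V₀) (hμ : ∀ v ∈ V₀, 0 ≤ μ v)
    (N : ℕ) (v : α) (hv : v ∈ V₀) (hne : σ (N + 1) ≠ v) :
    run G V₀ σ μ N v ≤ run G V₀ σ μ (N + 1) v := by
  rw [run_succ]
  unfold gtopple
  rw [if_pos hv, if_neg (fun h => hne h.symm)]
  split_ifs
  · exact le_add_of_nonneg_right
      (div_nonneg (run_nonneg G V₀ σ μ hσmem hμ N _ (hσmem _)) (Nat.cast_nonneg _))
  · exact le_refl _

/-- When `v` is toppled, each neighbour `w ∈ V₀` receives at least `μ(v)/deg(v)`. -/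
lemma run_send (hσmem : ∀ k, σ k ∈ V₀) (hμ : ∀ v ∈ V₀, 0 ≤ μ v)
    (N : ℕ) (w : α) (hw : w ∈ V₀) (hadj : G.Adj (σ (N + 1)) w) :
    run G V₀ σ μ N (σ (N + 1)) / G.degree (σ (N + 1)) ≤ run G V₀ σ μ (N + 1) w := by
  rw [run_succ]
  unfold gtopple
  rw [if_pos hw, if_neg hadj.ne', if_pos hadj]
  exact le_add_of_nonneg_left (run_nonneg G V₀ σ μ hσmem hμ N w hw)

/-- The criterion: if the mass toppled at `v` is eventually small, then the mass
at `v` tends to zero. -/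
lemma tendsto_of_crit (hσmem : ∀ k, σ k ∈ V₀) (hμ : ∀ v ∈ V₀, 0 ≤ μ v)
    (v : α) (hv : v ∈ V₀) (hinf : {k : ℕ | σ k = v}.Infinite)
    (hcrit : ∀ ε > (0 : ℝ), ∃ K, ∀ k ≥ K, σ (k + 1) = v → run G V₀ σ μ k v < ε) :
    Tendsto (fun N => run G V₀ σ μ N v) atTop (nhds 0) := by
  rw [Metric.tendsto_atTop]
  intro ε hε
  obtain ⟨K, hK⟩ := hcrit ε hε
  refine ⟨K, fun N hN => ?_⟩
  have hex : ∃ k, N < k ∧ σ k = v := by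
    obtain ⟨b, hb, hlt⟩ := hinf.exists_gt N
    exact ⟨b, hlt, hb⟩
  classical
  set k := Nat.find hex with hkdef
  obtain ⟨hkN, hkv⟩ := Nat.find_spec hex
  have hmin : ∀ j, N < j → j < k → σ j ≠ v := by
    intro j hj1 hj2 hjv
    exact Nat.find_min hex hj2 ⟨hj1, hjv⟩
  have chain : ∀ m, N + m < k → run G V₀ σ μ N v ≤ run G V₀ σ μ (N + m) v := by
    intro m
    induction m with
    | zero => intro _; exact le_refl _
    | succ m ih =>
      intro h
      refine le_trans (ih (by omega)) ?_
      exact run_mono_of_ne G V₀ σ μ hσmem hμ (N + m) v hv (hmin _ (by omega) (by omega))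
  have hk1 : N + (k - 1 - N) = k - 1 := by omega
  have hle : run G V₀ σ μ N v ≤ run G V₀ σ μ (k - 1) v := by
    rw [← hk1]
    exact chain _ (by omega)
  have hsucc : k - 1 + 1 = k := by omega
  have hlt : run G V₀ σ μ (k - 1) v < ε := by
    apply hK (k - 1) (by omega)
    rw [hsucc]
    exact hkv
  have hnn : 0 ≤ run G V₀ σ μ N v := run_nonneg G V₀ σ μ hσmem hμ N v hv
  rw [Real.dist_eq, sub_zero, abs_of_nonneg hnn]
  exact lt_of_le_of_lt hle hlt

/-- Base case: a vertex adjacent to a sink. -/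
lemma crit_of_sink_neighbor (hσmem : ∀ k, σ k ∈ V₀) (hμ : ∀ v ∈ V₀, 0 ≤ μ v)
    (hdeg : ∀ u : α, 0 < G.degree u)
    (v : α) (s : α) (hadj : G.Adj v s) (hs : s ∉ V₀) :
    ∀ ε > (0 : ℝ), ∃ K, ∀ k ≥ K, σ (k + 1) = v → run G V₀ σ μ k v < ε := by
  intro ε hε
  have hd : (0 : ℝ) < G.degree v := by exact_mod_cast hdeg v
  have hdiff := mass_diff_tendsto G V₀ σ μ hσmem hμ hdeg
  rw [Metric.tendsto_atTop] at hdiff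
  obtain ⟨K, hK⟩ := hdiff (ε / G.degree v) (by positivity)
  refine ⟨K, fun k hk hkv => ?_⟩
  have hdrop := mass_drop G V₀ σ μ hσmem hμ k s (by rw [hkv]; exact hadj) hs
  rw [hkv] at hdrop
  have h1 : run G V₀ σ μ k v / G.degree v ≤ mass G V₀ σ μ k - mass G V₀ σ μ (k + 1) := by
    linarith
  have h2 := hK k hk
  rw [Real.dist_eq, sub_zero] at h2
  have h3 : mass G V₀ σ μ k - mass G V₀ σ μ (k + 1) < ε / G.degree v :=
    lt_of_le_of_lt (le_abs_self _) h2
  have h4 : run G V₀ σ μ k v / G.degree v < ε / G.degree v := lt_of_le_of_lt h1 h3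
  exact (div_lt_div_iff_of_pos_right hd).mp h4

/-- Inductive step: a vertex adjacent to a vertex whose mass tends to zero. -/
lemma crit_of_good_neighbor (hσmem : ∀ k, σ k ∈ V₀) (hμ : ∀ v ∈ V₀, 0 ≤ μ v)
    (hdeg : ∀ u : α, 0 < G.degree u)
    (v : α) (w : α) (hadj : G.Adj v w) (hw : w ∈ V₀)
    (hgood : Tendsto (fun N => run G V₀ σ μ N w) atTop (nhds 0)) :
    ∀ ε > (0 : ℝ), ∃ K, ∀ k ≥ K, σ (k + 1) = v → run G V₀ σ μ k v < ε := by
  intro ε hε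
  have hd : (0 : ℝ) < G.degree v := by exact_mod_cast hdeg v
  rw [Metric.tendsto_atTop] at hgood
  obtain ⟨K, hK⟩ := hgood (ε / G.degree v) (by positivity)
  refine ⟨K, fun k hk hkv => ?_⟩
  have hsend := run_send G V₀ σ μ hσmem hμ k w hw (by rw [hkv]; exact hadj)
  rw [hkv] at hsend
  have h2 := hK (k + 1) (by omega)
  rw [Real.dist_eq, sub_zero] at h2
  have h3 : run G V₀ σ μ (k + 1) w < ε / G.degree v :=
    lt_of_le_of_lt (le_abs_self _) h2
  have h4 : run G V₀ σ μ k v / G.degree v < ε / G.degree v :=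
    lt_of_le_of_lt hsend h3
  exact (div_lt_div_iff_of_pos_right hd).mp h4

end Aux

/-- Let `G = (V, E)` be a finite connected simple graph and
`V = V₀ ⊔ V₁` a partition into two nonempty sets (source and sink). Then for every map
`σ : ℕ → V₀` hitting each vertex of `V₀` infinitely often, and every `μ : V₀ → [0,∞)`,
one has `(T_{σ(N)} ∘ ⋯ ∘ T_{σ(1)} μ)(v) → 0` as `N → ∞`, for every `v ∈ V₀`. -/
theorem stmt3 (G : SimpleGraph α) [DecidableRel G.Adj] (hconn : G.Connected)
    (V₀ : Set α) [DecidablePred (· ∈ V₀)]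
    (hV₀ : V₀.Nonempty) (hV₁ : V₀ᶜ.Nonempty)
    (σ : ℕ → α) (hσmem : ∀ k, σ k ∈ V₀)
    (hσinf : ∀ v ∈ V₀, {k : ℕ | σ k = v}.Infinite)
    (μ : α → ℝ) (hμ : ∀ v ∈ V₀, 0 ≤ μ v) :
    ∀ v ∈ V₀, Tendsto (fun N => run G V₀ σ μ N v) atTop (nhds 0) := by
  classical
  obtain ⟨u₀, hu₀⟩ := hV₀
  obtain ⟨s₀, hs₀⟩ := hV₁
  have hnontriv : Nontrivial α := ⟨u₀, s₀, fun h => hs₀ (h ▸ hu₀)⟩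
  -- every vertex has positive degree
  have hdeg : ∀ u : α, 0 < G.degree u := by
    intro u
    rw [SimpleGraph.degree_pos_iff_exists_adj]
    obtain ⟨t, ht⟩ := exists_ne u
    obtain ⟨p⟩ := hconn.preconnected u t
    cases p with
    | nil => exact absurd rfl ht.symm
    | cons h q => exact ⟨_, h⟩
  -- main induction along a walk to the sink
  have main : ∀ {v s : α} (p : G.Walk v s), s ∉ V₀ → v ∈ V₀ →
      Tendsto (fun N => run G V₀ σ μ N v) atTop (nhds 0) := by
    intro v s p
    induction p with
    | nil => intro hs hv; exact absurd hv hs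
    | @cons v w s' h q ih =>
      intro hs hv
      by_cases hw : w ∈ V₀
      · exact tendsto_of_crit G V₀ σ μ hσmem hμ v hv (hσinf v hv)
          (crit_of_good_neighbor G V₀ σ μ hσmem hμ hdeg v w h hw (ih hs hw))
      · exact tendsto_of_crit G V₀ σ μ hσmem hμ v hv (hσinf v hv)
          (crit_of_sink_neighbor G V₀ σ μ hσmem hμ hdeg v w h hw)
  intro v hv
  obtain ⟨p⟩ := hconn.preconnected v s₀
  exact main p hs₀ hv

end GraphToppling
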